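/- Let m be a natural number, S an abstract simplicial complex on Fin m, R a commutative ring, and for each i in Fin m let A_i be a finite type, B_i ⊆ A_i a subset, and w_i : A_i → R a weight function. Let Z be the polyhedral product, i.e. the set of x ∈ ∏_i A_i with {i | x_i ∉ B_i} ∈ S. Then ∑_{x ∈ Z} ∏_{i} w_i(x_i) = ∑_{J ∈ S} (∏_{j ∈ J} (∑_{a ∈ A_j \ B_j} w_j(a))) · (∏_{i ∉ J} (∑_{b ∈ B_i} w_i(b))). (A weighted generalization of the paper's Theorem, recovering the cardinality formula when all weights are 1.) -/

import Mathlib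

/-!
Group the points of the polyhedral product by their support `J ∈ S`. The points with support
exactly `J` form the box `∏_{j ∈ J} (A_j \ B_j) × ∏_{i ∉ J} B_i`, and summing a product weight
over a box factors into the product of the coordinatewise sums.
-/

open Finset

namespace PolyhedralProduct

variable {ι : Type*} [Fintype ι] {A : ι → Type*} [∀ i, DecidableEq (A i)]

def support (B : ∀ i, Finset (A i)) (x : ∀ i, A i) : Finset ι :=
  univ.filter fun i => x i ∉ B i

variable [DecidableEq ι] [∀ i, Fintype (A i)]

def fiberBox (B : ∀ i, Finset (A i)) (J : Finset ι) : ∀ i, Finset (A i) :=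
  fun i => if i ∈ J then (B i)ᶜ else B i

theorem support_eq_iff_mem_piFinset (B : ∀ i, Finset (A i)) (J : Finset ι) (x : ∀ i, A i) :
    support B x = J ↔ x ∈ Fintype.piFinset (fiberBox B J) := by
  simp only [Finset.ext_iff, support, fiberBox, mem_filter, mem_univ, true_and,
    Fintype.mem_piFinset]
  refine forall_congr' fun i => ?_
  by_cases hi : i ∈ J <;> simp [hi]

theorem sum_prod_of_support_eq {R : Type*} [CommSemiring R] (B : ∀ i, Finset (A i))
    (w : ∀ i, A i → R) (J : Finset ι) :
    ∑ x with support B x = J, ∏ i, w i (x i)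
      = (∏ j ∈ J, ∑ a ∈ (B j)ᶜ, w j a) * ∏ i ∈ Jᶜ, ∑ b ∈ B i, w i b := by
  have hfiber : univ.filter (fun x => support B x = J) = Fintype.piFinset (fiberBox B J) := by
    ext x
    simpa using support_eq_iff_mem_piFinset B J x
  rw [hfiber, ← prod_univ_sum, ← prod_mul_prod_compl J]
  congr 1 <;> refine prod_congr rfl fun i hi => ?_
  · simp [fiberBox, hi]
  · simp [fiberBox, mem_compl.mp hi]

theorem sum_prod_of_support_mem {R : Type*} [CommSemiring R] (S : Finset (Finset ι))
    (B : ∀ i, Finset (A i)) (w : ∀ i, A i → R) :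
    ∑ x with support B x ∈ S, ∏ i, w i (x i)
      = ∑ J ∈ S, (∏ j ∈ J, ∑ a ∈ (B j)ᶜ, w j a) * ∏ i ∈ Jᶜ, ∑ b ∈ B i, w i b := by
  rw [← sum_fiberwise_of_maps_to (g := support B) fun x hx => (mem_filter.mp hx).2]
  refine sum_congr rfl fun J hJ => ?_
  rw [filter_filter, ← sum_prod_of_support_eq]
  congr 1
  ext x
  simp only [mem_filter, mem_univ, true_and, and_iff_right_iff_imp]
  rintro rfl
  exact hJ

end PolyhedralProduct

theorem weighted_polyhedral_product_sum_general
    (m : ℕ) (S : Finset (Finset (Fin m)))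
    (R : Type) [CommRing R]
    (A : Fin m → Type) [∀ i, Fintype (A i)] [∀ i, DecidableEq (A i)]
    (B : ∀ i, Finset (A i)) (w : ∀ i, A i → R) :
    ∑ x : {x : ∀ i, A i // Finset.univ.filter (fun i => x i ∉ B i) ∈ S},
        ∏ i, w i (x.1 i)
      = ∑ J ∈ S, (∏ j ∈ J, ∑ a ∈ (B j)ᶜ, w j a) *
          ∏ i ∈ Jᶜ, ∑ b ∈ B i, w i b := by
  rw [← PolyhedralProduct.sum_prod_of_support_mem S B w]
  exact (Finset.sum_subtype _ Finset.mem_filter_univ fun x : ∀ i, A i => ∏ i, w i (x i)).symm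

/-- Weighted generalization of the Theorem: for weight functions `w i : A i → R`,
the sum of `∏ i, w i (x i)` over the polyhedral product equals
`∑_{J ∈ S} (∏_{j ∈ J} ∑_{a ∈ A j \ B j} w j a) * (∏_{i ∉ J} ∑_{b ∈ B i} w i b)`. -/
theorem weighted_polyhedral_product_sum
    (m : ℕ) (S : Finset (Finset (Fin m)))
    (hS_down : ∀ J ∈ S, ∀ I ⊆ J, I ∈ S) (hS_empty : ∅ ∈ S)
    (R : Type) [CommRing R]
    (A : Fin m → Type) [∀ i, Fintype (A i)] [∀ i, DecidableEq (A i)]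
    (B : ∀ i, Finset (A i)) (w : ∀ i, A i → R) :
    ∑ x : {x : ∀ i, A i // Finset.univ.filter (fun i => x i ∉ B i) ∈ S},
        ∏ i, w i (x.1 i)
      = ∑ J ∈ S, (∏ j ∈ J, ∑ a ∈ (B j)ᶜ, w j a) *
          ∏ i ∈ Jᶜ, ∑ b ∈ B i, w i b :=
  weighted_polyhedral_product_sum_general m S R A B w
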